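/- Error bound for convex recovery over a cone: let x_0 ∈ R^d, Φ an m×d matrix, y = Φx_0 + ε with ‖ε‖_2 ≤ η, and f : R^d → R ∪ {∞} proper convex. If x# minimizes f(x) subject to ‖Φx − y‖_2 ≤ η, then ‖x# − x_0‖_2 ≤ 2η / λ_min(Φ; D(f, x_0)), where λ_min(Φ; K) = inf{‖Φu‖_2 : u ∈ K, ‖u‖_2 = 1} and D(f,x) = ∪_{τ>0}{y : f(x+τy) ≤ f(x)} is the descent cone. -/

import Mathlib

/-! The minimiser `x#` satisfies `f x# ≤ f x₀` because `x₀` is feasible, so `x# - x₀` lies in the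
descent cone `D(f, x₀)` and `λ_min(Φ; D) ‖x# - x₀‖ ≤ ‖Φ (x# - x₀)‖`. Both `Φ x#` and `Φ x₀` lie
within `η` of `y`, hence `‖Φ (x# - x₀)‖ ≤ 2η`. -/

open Matrix

/-- The linear measurement map `x ↦ Φ x` regarded as a map between Euclidean spaces (so that
norms are the `ℓ₂`-norms). -/
noncomputable def mulVecEuclidean {m d : ℕ} (Φ : Matrix (Fin m) (Fin d) ℝ)
    (x : EuclideanSpace ℝ (Fin d)) : EuclideanSpace ℝ (Fin m) :=
  (WithLp.equiv 2 (Fin m → ℝ)).symm (Φ.mulVec ((WithLp.equiv 2 (Fin d → ℝ)) x))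

section ConicSingularValue

variable {E F β : Type*}

def descentCone [AddCommGroup E] [Module ℝ E] [Preorder β] (f : E → β) (x : E) : Set E :=
  {u | ∃ τ : ℝ, 0 < τ ∧ f (x + τ • u) ≤ f x}

theorem smul_mem_descentCone [AddCommGroup E] [Module ℝ E] [Preorder β] {f : E → β} {x u : E}
    {c : ℝ} (hc : 0 < c) (hu : u ∈ descentCone f x) : c • u ∈ descentCone f x := by
  obtain ⟨τ, hτ, hle⟩ := hu
  exact ⟨τ / c, div_pos hτ hc, by rwa [smul_smul, div_mul_cancel₀ τ hc.ne']⟩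

theorem sub_mem_descentCone [AddCommGroup E] [Module ℝ E] [Preorder β] {f : E → β} {x z : E}
    (h : f z ≤ f x) : z - x ∈ descentCone f x :=
  ⟨1, one_pos, by rwa [one_smul, add_sub_cancel]⟩

noncomputable def minConicSingularValue [Norm E] [Norm F] (A : E → F) (K : Set E) : ℝ :=
  sInf {r | ∃ u, u ∈ K ∧ ‖u‖ = 1 ∧ r = ‖A u‖}

theorem minConicSingularValue_mul_norm_le [NormedAddCommGroup E] [NormedSpace ℝ E]
    [NormedAddCommGroup F] [NormedSpace ℝ F] (A : E →ₗ[ℝ] F) {K : Set E}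
    (hK : ∀ c : ℝ, 0 < c → ∀ u ∈ K, c • u ∈ K) {v : E} (hv : v ∈ K) :
    minConicSingularValue A K * ‖v‖ ≤ ‖A v‖ := by
  rcases eq_or_ne v 0 with rfl | hv0
  · simp
  have ht : 0 < ‖v‖ := norm_pos_iff.mpr hv0
  have hmem : ‖A (‖v‖⁻¹ • v)‖ ∈ {r | ∃ u, u ∈ K ∧ ‖u‖ = 1 ∧ r = ‖A u‖} :=
    ⟨_, hK _ (inv_pos.mpr ht) v hv, norm_smul_inv_norm hv0, rfl⟩
  have hbdd : BddBelow {r | ∃ u, u ∈ K ∧ ‖u‖ = 1 ∧ r = ‖A u‖} :=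
    ⟨0, by rintro r ⟨u, -, -, rfl⟩; exact norm_nonneg _⟩
  calc minConicSingularValue A K * ‖v‖ ≤ ‖A (‖v‖⁻¹ • v)‖ * ‖v‖ :=
        mul_le_mul_of_nonneg_right (csInf_le hbdd hmem) ht.le
    _ = ‖A v‖ := by
        rw [map_smul, norm_smul, norm_inv, norm_norm, mul_comm, ← mul_assoc,
          mul_inv_cancel₀ ht.ne', one_mul]

end ConicSingularValue

theorem mulVecEuclidean_eq_toLpLin {m d : ℕ} (Φ : Matrix (Fin m) (Fin d) ℝ) :
    mulVecEuclidean Φ = ⇑(toLpLin 2 2 Φ) :=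
  rfl

theorem convex_recovery_error_bound_general (d m : ℕ) (Φ : Matrix (Fin m) (Fin d) ℝ)
    (x₀ : EuclideanSpace ℝ (Fin d)) (ε : EuclideanSpace ℝ (Fin m)) (η : ℝ) (hε : ‖ε‖ ≤ η)
    (f : EuclideanSpace ℝ (Fin d) → EReal)
    (y : EuclideanSpace ℝ (Fin m)) (hy : y = mulVecEuclidean Φ x₀ + ε)
    (xs : EuclideanSpace ℝ (Fin d))
    (hfeas : ‖mulVecEuclidean Φ xs - y‖ ≤ η)
    (hmin : ∀ x : EuclideanSpace ℝ (Fin d),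
      ‖mulVecEuclidean Φ x - y‖ ≤ η → f xs ≤ f x) :
    sInf {r : ℝ | ∃ u : EuclideanSpace ℝ (Fin d),
        (∃ τ : ℝ, 0 < τ ∧ f (x₀ + τ • u) ≤ f x₀) ∧ ‖u‖ = 1 ∧
          r = ‖mulVecEuclidean Φ u‖}
      * ‖xs - x₀‖ ≤ 2 * η := by
  have hx₀ : ‖mulVecEuclidean Φ x₀ - y‖ ≤ η := by simpa [hy] using hε
  have hdescent : xs - x₀ ∈ descentCone f x₀ := sub_mem_descentCone (hmin x₀ hx₀)
  change minConicSingularValue (mulVecEuclidean Φ) (descentCone f x₀) * ‖xs - x₀‖ ≤ 2 * η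
  rw [mulVecEuclidean_eq_toLpLin] at hfeas hx₀ ⊢
  calc _ ≤ ‖toLpLin 2 2 Φ (xs - x₀)‖ :=
        minConicSingularValue_mul_norm_le _ (fun _ hc _ ↦ smul_mem_descentCone hc) hdescent
    _ = ‖(toLpLin 2 2 Φ xs - y) - (toLpLin 2 2 Φ x₀ - y)‖ := by
        rw [map_sub, sub_sub_sub_cancel_right]
    _ ≤ η + η := norm_sub_le_of_le hfeas hx₀
    _ = 2 * η := (two_mul η).symm

/-- Error bound for convex recovery over a cone (Tropp, after
Chandrasekaran–Recht–Parrilo–Willsky).  Let `y = Φ x₀ + ε` with `‖ε‖₂ ≤ η`, let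
`f : ℝ^d → ℝ ∪ {∞}` be proper convex, and let `x#` minimize `f` subject to
`‖Φx − y‖₂ ≤ η`.  Then `‖x# − x₀‖₂ ≤ 2η / λ_min(Φ; D(f,x₀))`, where
`λ_min(Φ; K) = inf {‖Φu‖₂ : u ∈ K, ‖u‖₂ = 1}` and
`D(f,x) = ∪_{τ>0} {u : f(x + τu) ≤ f(x)}` is the descent cone; stated in the
division-free form `λ_min(Φ; D(f,x₀)) · ‖x# − x₀‖₂ ≤ 2η`, which is trivially true
when `λ_min = 0` (interpreting `2η/0 = ∞`). -/
theorem convex_recovery_error_bound (d m : ℕ) (Φ : Matrix (Fin m) (Fin d) ℝ)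
    (x₀ : EuclideanSpace ℝ (Fin d)) (ε : EuclideanSpace ℝ (Fin m)) (η : ℝ) (hε : ‖ε‖ ≤ η)
    (f : EuclideanSpace ℝ (Fin d) → EReal)
    (hconv : ∀ x y : EuclideanSpace ℝ (Fin d), ∀ a b : ℝ, 0 ≤ a → 0 ≤ b → a + b = 1 →
      f (a • x + b • y) ≤ (a : EReal) * f x + (b : EReal) * f y)
    (hproper : ∃ x, f x ≠ ⊤) (hnobot : ∀ x, f x ≠ ⊥)
    (y : EuclideanSpace ℝ (Fin m)) (hy : y = mulVecEuclidean Φ x₀ + ε)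
    (xs : EuclideanSpace ℝ (Fin d))
    (hfeas : ‖mulVecEuclidean Φ xs - y‖ ≤ η)
    (hmin : ∀ x : EuclideanSpace ℝ (Fin d),
      ‖mulVecEuclidean Φ x - y‖ ≤ η → f xs ≤ f x) :
    sInf {r : ℝ | ∃ u : EuclideanSpace ℝ (Fin d),
        (∃ τ : ℝ, 0 < τ ∧ f (x₀ + τ • u) ≤ f x₀) ∧ ‖u‖ = 1 ∧
          r = ‖mulVecEuclidean Φ u‖}
      * ‖xs - x₀‖ ≤ 2 * η :=
  convex_recovery_error_bound_general d m Φ x₀ ε η hε f y hy xs hfeas hmin
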